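/- Let V be a real inner product space of dimension 2m ≥ 6 with orthogonal almost complex structure J, and suppose a quadrilinear curvature-like tensor R satisfies R(x,y,z,u) = R(Jx,Jy,Jz,Ju) and has the form R = ν·π₁ + ((μ-ν)/3)·π₂ for some μ,ν ∈ ℝ with μ ≠ ν. Then for any θ-holomorphic plane with θ ∈ (0,π/2), the sectional curvature determines θ; in particular, two 2-planes with distinct holomorphy angles in (0,π/2) have distinct sectional curvatures. -/

import Mathlib

/-
For an orthonormal pair, π₁ contributes 1 and π₂ contributes 3 g(x,Jy)² to the sectional
curvature, so R(x,y,y,x) = ν + (μ - ν) cos² θ on a θ-holomorphic plane. As μ ≠ ν and cos² is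
injective on [0, π/2], the curvature determines θ.
-/

open RealInnerProductSpace

noncomputable def pi1 {V : Type*} [NormedAddCommGroup V] [InnerProductSpace ℝ V] :
    V → V → V → V → ℝ :=
  fun x y z u => ⟪x, u⟫ * ⟪y, z⟫ - ⟪x, z⟫ * ⟪y, u⟫

noncomputable def pi2 {V : Type*} [NormedAddCommGroup V] [InnerProductSpace ℝ V]
    (J : V →ₗ[ℝ] V) : V → V → V → V → ℝ :=
  fun x y z u => ⟪x, J u⟫ * ⟪y, J z⟫ - ⟪x, J z⟫ * ⟪y, J u⟫ - 2 * ⟪x, J y⟫ * ⟪z, J u⟫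

section

variable {V : Type*} [NormedAddCommGroup V] [InnerProductSpace ℝ V]

theorem inner_map_swap_eq_neg (J : V →ₗ[ℝ] V)
    (hJ2 : ∀ x, J (J x) = -x) (hJg : ∀ x y, ⟪J x, J y⟫ = ⟪x, y⟫) (x y : V) :
    ⟪y, J x⟫ = -⟪x, J y⟫ := by
  have h := hJg y (J x)
  rw [hJ2, inner_neg_right] at h
  rw [← h, real_inner_comm]

theorem pi1_of_orthonormal {x y : V} (hx : ‖x‖ = 1) (hy : ‖y‖ = 1) (hxy : ⟪x, y⟫ = 0) :
    pi1 x y y x = 1 := by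
  simp only [pi1, real_inner_self_eq_norm_sq, hx, hy, hxy]
  norm_num

theorem pi2_self_swap (J : V →ₗ[ℝ] V) (hJ2 : ∀ x, J (J x) = -x)
    (hJg : ∀ x y, ⟪J x, J y⟫ = ⟪x, y⟫) (x y : V) :
    pi2 J x y y x = 3 * ⟪x, J y⟫ ^ 2 := by
  have hswap := inner_map_swap_eq_neg J hJ2 hJg
  have hxJx : ⟪x, J x⟫ = 0 := by linarith [hswap x x]
  have hyJy : ⟪y, J y⟫ = 0 := by linarith [hswap y y]
  simp only [pi2, hxJx, hyJy, hswap x y]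
  ring

end

theorem injOn_cos_sq : Set.InjOn (fun θ => Real.cos θ ^ 2) (Set.Icc 0 (Real.pi / 2)) := by
  intro θ₁ hθ₁ θ₂ hθ₂ h
  have hpi : Real.pi / 2 ≤ Real.pi := by linarith [Real.pi_pos]
  have hcos₁ : 0 ≤ Real.cos θ₁ := Real.cos_nonneg_of_mem_Icc ⟨by linarith [hθ₁.1], hθ₁.2⟩
  have hcos₂ : 0 ≤ Real.cos θ₂ := Real.cos_nonneg_of_mem_Icc ⟨by linarith [hθ₂.1], hθ₂.2⟩
  exact Real.injOn_cos ⟨hθ₁.1, hθ₁.2.trans hpi⟩ ⟨hθ₂.1, hθ₂.2.trans hpi⟩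
    ((sq_eq_sq₀ hcos₁ hcos₂).mp h)

theorem sectional_curvature_determines_angle_general
    {V : Type*} [NormedAddCommGroup V] [InnerProductSpace ℝ V]
    (J : V →ₗ[ℝ] V) (hJ2 : ∀ x, J (J x) = -x) (hJg : ∀ x y, ⟪J x, J y⟫ = ⟪x, y⟫)
    (μ ν : ℝ) (hμν : μ ≠ ν) (R : V → V → V → V → ℝ)
    (hR : ∀ x y z u, R x y z u = ν * pi1 x y z u + (μ - ν) / 3 * pi2 J x y z u)
    (θ₁ θ₂ : ℝ) (hθ₁ : θ₁ ∈ Set.Ioo 0 (Real.pi / 2)) (hθ₂ : θ₂ ∈ Set.Ioo 0 (Real.pi / 2))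
    (hθ : θ₁ ≠ θ₂)
    (x₁ y₁ x₂ y₂ : V)
    (hx₁ : ‖x₁‖ = 1) (hy₁ : ‖y₁‖ = 1) (hxy₁ : ⟪x₁, y₁⟫ = 0)
    (hang₁ : |⟪x₁, J y₁⟫| = Real.cos θ₁)
    (hx₂ : ‖x₂‖ = 1) (hy₂ : ‖y₂‖ = 1) (hxy₂ : ⟪x₂, y₂⟫ = 0)
    (hang₂ : |⟪x₂, J y₂⟫| = Real.cos θ₂) :
    R x₁ y₁ y₁ x₁ ≠ R x₂ y₂ y₂ x₂ := by
  have curvature {x y : V} {θ : ℝ} (hx : ‖x‖ = 1) (hy : ‖y‖ = 1) (hxy : ⟪x, y⟫ = 0)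
      (hang : |⟪x, J y⟫| = Real.cos θ) : R x y y x = ν + (μ - ν) * Real.cos θ ^ 2 := by
    rw [hR, pi1_of_orthonormal hx hy hxy, pi2_self_swap J hJ2 hJg, ← hang, sq_abs]
    ring
  rw [curvature hx₁ hy₁ hxy₁ hang₁, curvature hx₂ hy₂ hxy₂ hang₂]
  intro h
  have hcos : Real.cos θ₁ ^ 2 = Real.cos θ₂ ^ 2 :=
    mul_left_cancel₀ (sub_ne_zero.mpr hμν) (add_left_cancel h)
  exact hθ (injOn_cos_sq (Set.Ioo_subset_Icc_self hθ₁) (Set.Ioo_subset_Icc_self hθ₂) hcos)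

theorem sectional_curvature_determines_angle
    {V : Type*} [NormedAddCommGroup V] [InnerProductSpace ℝ V] [FiniteDimensional ℝ V]
    (m : ℕ) (hdim : Module.finrank ℝ V = 2 * m) (hm : 6 ≤ 2 * m)
    (J : V →ₗ[ℝ] V) (hJ2 : ∀ x, J (J x) = -x) (hJg : ∀ x y, ⟪J x, J y⟫ = ⟪x, y⟫)
    (μ ν : ℝ) (hμν : μ ≠ ν) (R : V → V → V → V → ℝ)
    (hK : ∀ x y z u, R x y z u = R (J x) (J y) (J z) (J u))
    (hR : ∀ x y z u, R x y z u = ν * pi1 x y z u + (μ - ν) / 3 * pi2 J x y z u)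
    (θ₁ θ₂ : ℝ) (hθ₁ : θ₁ ∈ Set.Ioo 0 (Real.pi / 2)) (hθ₂ : θ₂ ∈ Set.Ioo 0 (Real.pi / 2))
    (hθ : θ₁ ≠ θ₂)
    (x₁ y₁ x₂ y₂ : V)
    (hx₁ : ‖x₁‖ = 1) (hy₁ : ‖y₁‖ = 1) (hxy₁ : ⟪x₁, y₁⟫ = 0)
    (hang₁ : |⟪x₁, J y₁⟫| = Real.cos θ₁)
    (hx₂ : ‖x₂‖ = 1) (hy₂ : ‖y₂‖ = 1) (hxy₂ : ⟪x₂, y₂⟫ = 0)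
    (hang₂ : |⟪x₂, J y₂⟫| = Real.cos θ₂) :
    R x₁ y₁ y₁ x₁ ≠ R x₂ y₂ y₂ x₂ :=
  sectional_curvature_determines_angle_general J hJ2 hJg μ ν hμν R hR θ₁ θ₂ hθ₁ hθ₂ hθ x₁ y₁ x₂ y₂
    hx₁ hy₁ hxy₁ hang₁ hx₂ hy₂ hxy₂ hang₂
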